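/- (Sublinear norm convergence of proximal gradient descent) Under the same setting, with constant step t = η/L (0 < η ≤ 1) and iterates x^{k+1} = x^k − tG(x^k, t), for every k ≥ 1: ‖G(x^k, η/L)‖² ≤ L(φ(x^0) − φ̄)/(η k). -/

import Mathlib

/-!
Write `T z = prox_{tg}(z - t ∇f z)`, so that `x (k+1) = T (x k)` and `G(x k) = (x k - T (x k)) / t`.
The prox is (firmly) nonexpansive and, by Baillon–Haddad cocoercivity of `∇f` with `t L ≤ 1`,
`‖T z - T (T z)‖² ≤ ‖z - T z‖² - t ⟪∇f z - ∇f (T z), z - T z⟫`, whose right-hand side is at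
most `t (φ z - φ (T z))` by the prox optimality condition and the gradient inequality for `f`.
Hence `‖x k - T (x k)‖` is nonincreasing and each term bounds the previous decrease of `φ`;
telescoping gives `k ‖x k - T (x k)‖² ≤ t (φ (x 0) - φ̄)`.
-/

open scoped RealInnerProductSpace

open Set Filter Topology

theorem le_of_forall_mem_Ioc_le_add_mul {a b c : ℝ} (h : ∀ l ∈ Ioc (0 : ℝ) 1, a ≤ b + l * c) :
    a ≤ b := by
  have hlim : Tendsto (fun l : ℝ => b + l * c) (𝓝[>] 0) (𝓝 b) := by
    have : Continuous (fun l : ℝ => b + l * c) := by fun_prop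
    simpa using (this.tendsto 0).mono_left nhdsWithin_le_nhds
  exact ge_of_tendsto hlim (eventually_of_mem (Ioc_mem_nhdsGT zero_lt_one) h)

theorem nat_mul_le_mul_sub_of_antitone {a F : ℕ → ℝ} {c : ℝ} (ha : Antitone a)
    (hdec : ∀ n, a (n + 1) ≤ c * (F n - F (n + 1))) (k : ℕ) :
    k * a k ≤ c * (F 0 - F k) := by
  induction k with
  | zero => simp
  | succ k ih =>
    have := mul_le_mul_of_nonneg_left (ha k.le_succ) k.cast_nonneg
    push_cast
    linarith [hdec k]

section Smooth

variable {E : Type*} [NormedAddCommGroup E] [InnerProductSpace ℝ E] [CompleteSpace E]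
  {f : E → ℝ} {f' : E → E}

theorem HasGradientAt.hasDerivAt_add_smul {g x d : E} {s : ℝ}
    (h : HasGradientAt f g (x + s • d)) :
    HasDerivAt (fun s : ℝ => f (x + s • d)) ⟪g, d⟫ s := by
  have hline : HasDerivAt (fun s : ℝ => x + s • d) d s := by
    simpa using ((hasDerivAt_id s).smul_const d).const_add x
  simpa [InnerProductSpace.toDual_apply_apply, Function.comp_def] using
    h.hasFDerivAt.comp_hasDerivAt s hline

theorem ConvexOn.add_inner_le_of_hasGradientAt (hconv : ConvexOn ℝ univ f) {g x : E}
    (hg : HasGradientAt f g x) (y : E) :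
    f x + ⟪g, y - x⟫ ≤ f y := by
  have hline : ConvexOn ℝ univ (fun s : ℝ => f (x + s • (y - x))) := by
    have e : (fun s : ℝ => f (x + s • (y - x))) = f ∘ AffineMap.lineMap x y := by
      ext s
      simp [AffineMap.lineMap_apply, add_comm]
    simpa [e] using hconv.comp_affineMap (AffineMap.lineMap x y)
  have hderiv : HasDerivAt (fun s : ℝ => f (x + s • (y - x))) ⟪g, y - x⟫ 0 :=
    HasGradientAt.hasDerivAt_add_smul (by simpa using hg)
  have := hline.le_slope_of_hasDerivAt (mem_univ 0) (mem_univ 1) one_pos hderiv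
  simp only [slope_def_field, one_smul, add_sub_cancel, zero_smul, add_zero, sub_zero,
    div_one] at this
  linarith

theorem le_add_inner_add_sq_of_lipschitz_gradient {L : ℝ}
    (hf : ∀ x, HasGradientAt f (f' x) x) (hlip : ∀ x y, ‖f' x - f' y‖ ≤ L * ‖x - y‖)
    (x y : E) :
    f y ≤ f x + ⟪f' x, y - x⟫ + L / 2 * ‖y - x‖ ^ 2 := by
  set d := y - x
  let q : ℝ → ℝ := fun s => f (x + s • d) - s * ⟪f' x, d⟫ - L / 2 * s ^ 2 * ‖d‖ ^ 2
  have hq : ∀ s, HasDerivAt q (⟪f' (x + s • d) - f' x, d⟫ - L * s * ‖d‖ ^ 2) s := by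
    intro s
    have h : HasDerivAt q _ s :=
      (((hf (x + s • d)).hasDerivAt_add_smul).sub ((hasDerivAt_id s).mul_const ⟪f' x, d⟫)).sub
        (((hasDerivAt_pow 2 s).const_mul (L / 2)).mul_const (‖d‖ ^ 2))
    refine h.congr_deriv ?_
    simp only [inner_sub_left, one_mul, Nat.cast_ofNat]
    ring
  have hanti : AntitoneOn q (Ici 0) := by
    refine antitoneOn_of_hasDerivWithinAt_nonpos (convex_Ici 0)
      (fun s _ => (hq s).continuousAt.continuousWithinAt) (fun s _ => (hq s).hasDerivWithinAt) ?_
    intro s hs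
    rw [interior_Ici] at hs
    have hlip_s : ‖f' (x + s • d) - f' x‖ ≤ L * (s * ‖d‖) := by
      simpa [norm_smul, abs_of_pos (mem_Ioi.mp hs)] using hlip (x + s • d) x
    have := (real_inner_le_norm _ d).trans (mul_le_mul_of_nonneg_right hlip_s (norm_nonneg d))
    linarith
  have h01 := hanti (mem_Ici.mpr le_rfl) (show (0:ℝ) ≤ 1 from zero_le_one) zero_le_one
  simp only [q, d, one_smul, zero_smul, add_zero, add_sub_cancel] at h01
  linarith

theorem ConvexOn.inner_sub_nonneg_of_hasGradientAt (hconv : ConvexOn ℝ univ f)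
    (hf : ∀ x, HasGradientAt f (f' x) x) (x y : E) :
    0 ≤ ⟪f' x - f' y, x - y⟫ := by
  have hxy := hconv.add_inner_le_of_hasGradientAt (hf x) y
  have hyx := hconv.add_inner_le_of_hasGradientAt (hf y) x
  rw [← neg_sub x y, inner_neg_right] at hxy
  rw [inner_sub_left]
  linarith

theorem ConvexOn.add_inner_add_sq_norm_sub_le {L : ℝ} (hL : 0 < L) (hconv : ConvexOn ℝ univ f)
    (hf : ∀ x, HasGradientAt f (f' x) x) (hlip : ∀ x y, ‖f' x - f' y‖ ≤ L * ‖x - y‖)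
    (x y : E) :
    f x + ⟪f' x, y - x⟫ + 1 / (2 * L) * ‖f' y - f' x‖ ^ 2 ≤ f y := by
  set w := f' y - f' x
  -- compare the two first-order bounds at the minimiser of the quadratic upper bound at `y`
  set z := y - L⁻¹ • w
  have hlower := hconv.add_inner_le_of_hasGradientAt (hf x) z
  have hupper := le_add_inner_add_sq_of_lipschitz_gradient hf hlip y z
  have hzx : ⟪f' x, z - x⟫ = ⟪f' x, y - x⟫ - L⁻¹ * ⟪f' x, w⟫ := by
    rw [show z - x = (y - x) - L⁻¹ • w by simp only [z]; abel, inner_sub_right,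
      real_inner_smul_right]
  have hzy : ⟪f' y, z - y⟫ = -(L⁻¹ * ⟪f' y, w⟫) := by
    rw [show z - y = -(L⁻¹ • w) by simp only [z]; abel, inner_neg_right, real_inner_smul_right]
  have hzy' : ‖z - y‖ ^ 2 = L⁻¹ ^ 2 * ‖w‖ ^ 2 := by
    rw [show z - y = -(L⁻¹ • w) by simp only [z]; abel, norm_neg, norm_smul, mul_pow,
      Real.norm_of_nonneg (inv_nonneg.mpr hL.le)]
  have hw : ⟪f' y, w⟫ - ⟪f' x, w⟫ = ‖w‖ ^ 2 := by
    rw [← inner_sub_left, real_inner_self_eq_norm_sq]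
  rw [hzx] at hlower
  rw [hzy, hzy'] at hupper
  have hL' : L ≠ 0 := hL.ne'
  have : 1 / (2 * L) * ‖w‖ ^ 2 = L⁻¹ * (⟪f' y, w⟫ - ⟪f' x, w⟫) - L / 2 * (L⁻¹ ^ 2 * ‖w‖ ^ 2) := by
    rw [hw]; field_simp; ring
  linarith

theorem ConvexOn.sq_norm_sub_le_mul_inner {L : ℝ} (hL : 0 < L) (hconv : ConvexOn ℝ univ f)
    (hf : ∀ x, HasGradientAt f (f' x) x) (hlip : ∀ x y, ‖f' x - f' y‖ ≤ L * ‖x - y‖)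
    (x y : E) :
    ‖f' x - f' y‖ ^ 2 ≤ L * ⟪f' x - f' y, x - y⟫ := by
  have hxy := hconv.add_inner_add_sq_norm_sub_le hL hf hlip x y
  have hyx := hconv.add_inner_add_sq_norm_sub_le hL hf hlip y x
  have hsum : ⟪f' x, y - x⟫ + ⟪f' y, x - y⟫ = -⟪f' x - f' y, x - y⟫ := by
    rw [← neg_sub x y, inner_neg_right, inner_sub_left]; ring
  rw [norm_sub_rev] at hxy
  have : 1 / L * ‖f' x - f' y‖ ^ 2 ≤ ⟪f' x - f' y, x - y⟫ := by
    have : 1 / L * ‖f' x - f' y‖ ^ 2 = 2 * (1 / (2 * L) * ‖f' x - f' y‖ ^ 2) := by ring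
    linarith
  rwa [div_mul_eq_mul_div, one_mul, div_le_iff₀' hL] at this

end Smooth

section Prox

variable {E : Type*} [NormedAddCommGroup E] [InnerProductSpace ℝ E] {g : E → ℝ} {t : ℝ}

theorem ConvexOn.inner_sub_le_of_isMinOn_prox (hg : ConvexOn ℝ univ g) (ht : 0 < t) {p y : E}
    (hp : IsMinOn (fun z => g z + 1 / (2 * t) * ‖z - y‖ ^ 2) univ p) (u : E) :
    ⟪y - p, u - p⟫ ≤ t * (g u - g p) := by
  refine le_of_forall_mem_Ioc_le_add_mul (c := ‖u - p‖ ^ 2 / 2) fun l ⟨hl0, hl1⟩ => ?_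
  have hmin := isMinOn_iff.mp hp (p + l • (u - p)) (mem_univ _)
  have hconv : g (p + l • (u - p)) ≤ (1 - l) * g p + l * g u := by
    have h := hg.2 (mem_univ p) (mem_univ u) (by linarith : (0:ℝ) ≤ 1 - l) hl0.le (by ring)
    rwa [show (1 - l) • p + l • u = p + l • (u - p) by module, smul_eq_mul, smul_eq_mul] at h
  have hsq : ‖p + l • (u - p) - y‖ ^ 2
      = ‖p - y‖ ^ 2 - 2 * l * ⟪y - p, u - p⟫ + l ^ 2 * ‖u - p‖ ^ 2 := by
    rw [show p + l • (u - p) - y = -(y - p) + l • (u - p) by abel, norm_add_sq_real,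
      inner_neg_left, real_inner_smul_right, norm_neg, norm_smul, mul_pow,
      Real.norm_of_nonneg hl0.le, ← norm_neg (p - y), neg_sub]
    ring
  rw [hsq] at hmin
  -- minimality of `p` against the point `p + l • (u - p)`, bounded through convexity of `g`
  have key : l * ⟪y - p, u - p⟫ ≤ l * (t * (g u - g p) + l * (‖u - p‖ ^ 2 / 2)) := by
    have h2t : 1 / (2 * t) * (2 * t) = 1 := by field_simp
    nlinarith [mul_le_mul_of_nonneg_left (hmin.trans (add_le_add_left hconv _)) ht.le]
  exact le_of_mul_le_mul_left key hl0

theorem ConvexOn.sq_norm_sub_le_inner_of_isMinOn_prox (hg : ConvexOn ℝ univ g) (ht : 0 < t)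
    {p q y y' : E} (hp : IsMinOn (fun z => g z + 1 / (2 * t) * ‖z - y‖ ^ 2) univ p)
    (hq : IsMinOn (fun z => g z + 1 / (2 * t) * ‖z - y'‖ ^ 2) univ q) :
    ‖p - q‖ ^ 2 ≤ ⟪y - y', p - q⟫ := by
  have hpq := hg.inner_sub_le_of_isMinOn_prox ht hp q
  have hqp := hg.inner_sub_le_of_isMinOn_prox ht hq p
  have : ⟪y - p, q - p⟫ + ⟪y' - q, p - q⟫ = ‖p - q‖ ^ 2 - ⟪y - y', p - q⟫ := by
    rw [← neg_sub p q, inner_neg_right, ← real_inner_self_eq_norm_sq]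
    simp only [inner_sub_left]; ring
  linarith

theorem ConvexOn.norm_sub_le_of_isMinOn_prox (hg : ConvexOn ℝ univ g) (ht : 0 < t)
    {p q y y' : E} (hp : IsMinOn (fun z => g z + 1 / (2 * t) * ‖z - y‖ ^ 2) univ p)
    (hq : IsMinOn (fun z => g z + 1 / (2 * t) * ‖z - y'‖ ^ 2) univ q) :
    ‖p - q‖ ≤ ‖y - y'‖ := by
  have h := (hg.sq_norm_sub_le_inner_of_isMinOn_prox ht hp hq).trans (real_inner_le_norm _ _)
  rcases (norm_nonneg (p - q)).eq_or_lt with h0 | h0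
  · rw [← h0]; exact norm_nonneg _
  · nlinarith

end Prox

theorem sq_norm_sub_smul_le_of_sq_norm_le_mul_inner {E : Type*} [NormedAddCommGroup E]
    [InnerProductSpace ℝ E] {d v : E} {L t : ℝ} (hL : 0 < L) (ht : 0 ≤ t) (htL : t * L ≤ 1)
    (h : ‖v‖ ^ 2 ≤ L * ⟪v, d⟫) :
    ‖d - t • v‖ ^ 2 ≤ ‖d‖ ^ 2 - t * ⟪v, d⟫ := by
  have hvd : 0 ≤ ⟪v, d⟫ := (mul_nonneg_iff_of_pos_left hL).mp ((sq_nonneg _).trans h)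
  rw [norm_sub_sq_real, real_inner_smul_right, norm_smul, mul_pow, Real.norm_of_nonneg ht,
    real_inner_comm]
  nlinarith [mul_le_mul_of_nonneg_left h (sq_nonneg t), mul_nonneg ht hvd]

section ProxGrad

variable {E : Type*} [NormedAddCommGroup E] [InnerProductSpace ℝ E] [CompleteSpace E]
  {f g : E → ℝ} {f' prox : E → E} {L t : ℝ}

def proxGradStep (prox f' : E → E) (t : ℝ) (z : E) : E :=
  prox (z - t • f' z)

local notation "T" => proxGradStep prox f' t

theorem sq_norm_proxGradStep_sub_le (hL : 0 < L) (hconv : ConvexOn ℝ univ f)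
    (hf : ∀ x, HasGradientAt f (f' x) x) (hlip : ∀ x y, ‖f' x - f' y‖ ≤ L * ‖x - y‖)
    (hg : ConvexOn ℝ univ g) (ht : 0 < t) (htL : t * L ≤ 1)
    (hprox : ∀ y, IsMinOn (fun z => g z + 1 / (2 * t) * ‖z - y‖ ^ 2) univ (prox y)) (z : E) :
    ‖T z - T (T z)‖ ^ 2 ≤ ‖z - T z‖ ^ 2 - t * ⟪f' z - f' (T z), z - T z⟫ := by
  have hnonexp : ‖T z - T (T z)‖ ≤ ‖(z - T z) - t • (f' z - f' (T z))‖ := by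
    have h := hg.norm_sub_le_of_isMinOn_prox ht (hprox (z - t • f' z))
      (hprox (T z - t • f' (T z)))
    rwa [show z - t • f' z - (T z - t • f' (T z)) = (z - T z) - t • (f' z - f' (T z)) by
      rw [smul_sub]; abel] at h
  calc ‖T z - T (T z)‖ ^ 2 ≤ ‖(z - T z) - t • (f' z - f' (T z))‖ ^ 2 := by gcongr
    _ ≤ _ := sq_norm_sub_smul_le_of_sq_norm_le_mul_inner hL ht.le htL
        (hconv.sq_norm_sub_le_mul_inner hL hf hlip z (T z))

theorem sq_norm_sub_proxGradStep_sub_inner_le (hconv : ConvexOn ℝ univ f)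
    (hf : ∀ x, HasGradientAt f (f' x) x) (hg : ConvexOn ℝ univ g) (ht : 0 < t)
    (hprox : ∀ y, IsMinOn (fun z => g z + 1 / (2 * t) * ‖z - y‖ ^ 2) univ (prox y)) (z : E) :
    ‖z - T z‖ ^ 2 - t * ⟪f' z - f' (T z), z - T z⟫
      ≤ t * ((f z + g z) - (f (T z) + g (T z))) := by
  have hf_le := hconv.add_inner_le_of_hasGradientAt (hf (T z)) z
  have hg_le := hg.inner_sub_le_of_isMinOn_prox ht (hprox (z - t • f' z)) z
  have : z - t • f' z - T z = (z - T z) - t • f' z := by abel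
  change ⟪z - t • f' z - T z, z - T z⟫ ≤ t * (g z - g (T z)) at hg_le
  rw [this, inner_sub_left, real_inner_smul_left, real_inner_self_eq_norm_sq] at hg_le
  rw [inner_sub_left]
  nlinarith [mul_le_mul_of_nonneg_left hf_le ht.le]

theorem norm_proxGradStep_sub_le (hL : 0 < L) (hconv : ConvexOn ℝ univ f)
    (hf : ∀ x, HasGradientAt f (f' x) x) (hlip : ∀ x y, ‖f' x - f' y‖ ≤ L * ‖x - y‖)
    (hg : ConvexOn ℝ univ g) (ht : 0 < t) (htL : t * L ≤ 1)
    (hprox : ∀ y, IsMinOn (fun z => g z + 1 / (2 * t) * ‖z - y‖ ^ 2) univ (prox y)) (z : E) :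
    ‖T z - T (T z)‖ ≤ ‖z - T z‖ := by
  refine (pow_le_pow_iff_left₀ (norm_nonneg _) (norm_nonneg _) two_ne_zero).mp ?_
  have := sq_norm_proxGradStep_sub_le hL hconv hf hlip hg ht htL hprox z
  nlinarith [hconv.inner_sub_nonneg_of_hasGradientAt hf z (T z)]

theorem sq_norm_proxGradStep_sub_le_mul_sub (hL : 0 < L) (hconv : ConvexOn ℝ univ f)
    (hf : ∀ x, HasGradientAt f (f' x) x) (hlip : ∀ x y, ‖f' x - f' y‖ ≤ L * ‖x - y‖)
    (hg : ConvexOn ℝ univ g) (ht : 0 < t) (htL : t * L ≤ 1)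
    (hprox : ∀ y, IsMinOn (fun z => g z + 1 / (2 * t) * ‖z - y‖ ^ 2) univ (prox y)) (z : E) :
    ‖T z - T (T z)‖ ^ 2 ≤ t * ((f z + g z) - (f (T z) + g (T z))) :=
  (sq_norm_proxGradStep_sub_le hL hconv hf hlip hg ht htL hprox z).trans
    (sq_norm_sub_proxGradStep_sub_inner_le hconv hf hg ht hprox z)

end ProxGrad

/-- **Sublinear convergence of the proximal gradient mapping norm.** For step `t = η/L`,
`0 < η ≤ 1`, and iterates `x^{k+1} = x^k - t G(x^k,t)`, for every `k ≥ 1`: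
`‖G(x^k, η/L)‖² ≤ L(φ(x⁰) - φ̄)/(η k)`. -/
theorem sublinear_norm_convergence_prox_grad
    {E : Type*} [NormedAddCommGroup E] [InnerProductSpace ℝ E] [FiniteDimensional ℝ E]
    (f : E → ℝ) (f' : E → E) (g : E → ℝ) (L : ℝ) (hL : 0 < L)
    (hdiff : ∀ x, HasGradientAt f (f' x) x)
    (hconv : ConvexOn ℝ Set.univ f)
    (hlip : ∀ x y, ‖f' x - f' y‖ ≤ L * ‖x - y‖)
    (hg : ConvexOn ℝ Set.univ g)
    (η : ℝ) (hη : 0 < η) (hη1 : η ≤ 1) (prox : E → E)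
    (hprox : ∀ y : E, IsMinOn
      (fun z => g z + (1 / (2 * (η / L))) * ‖z - y‖ ^ 2) Set.univ (prox y))
    (xstar : E) (hmin : IsMinOn (fun z => f z + g z) Set.univ xstar)
    (x : ℕ → E)
    (hx : ∀ k, x (k + 1) =
      x k - (η / L) • ((L / η) • (x k - prox (x k - (η / L) • f' (x k))))) :
    ∀ k : ℕ, 1 ≤ k →
      ‖(L / η) • (x k - prox (x k - (η / L) • f' (x k)))‖ ^ 2
        ≤ L * ((f (x 0) + g (x 0)) - (f xstar + g xstar)) / (η * k) := by
  intro k hk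
  set t := η / L
  set T := proxGradStep prox f' t
  set φ := fun z => f z + g z
  have ht : 0 < t := div_pos hη hL
  have htL : t * L ≤ 1 := by rwa [div_mul_cancel₀ η hL.ne']
  have hstep : ∀ n, x (n + 1) = T (x n) := fun n => by
    rw [hx n, smul_smul, div_mul_div_cancel₀ hL.ne', div_self hη.ne', one_smul, sub_sub_cancel]
    rfl
  have hanti : Antitone fun n => ‖x n - T (x n)‖ ^ 2 := antitone_nat_of_succ_le fun n => by
    rw [hstep n]
    gcongr
    exact norm_proxGradStep_sub_le hL hconv hdiff hlip hg ht htL hprox (x n)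
  have hdec : ∀ n, ‖x (n + 1) - T (x (n + 1))‖ ^ 2 ≤ t * (φ (x n) - φ (x (n + 1))) := fun n => by
    rw [hstep n]
    exact sq_norm_proxGradStep_sub_le_mul_sub hL hconv hdiff hlip hg ht htL hprox (x n)
  have hbound := nat_mul_le_mul_sub_of_antitone hanti hdec k
  have hφ : φ xstar ≤ φ (x k) := hmin (mem_univ _)
  have hk : (0 : ℝ) < k := by exact_mod_cast hk
  change ‖(L / η) • (x k - T (x k))‖ ^ 2 ≤ L * (φ (x 0) - φ xstar) / (η * k)
  rw [norm_smul, mul_pow, Real.norm_of_nonneg (div_pos hL hη).le, le_div_iff₀ (by positivity)]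
  calc (L / η) ^ 2 * ‖x k - T (x k)‖ ^ 2 * (η * k)
      = L ^ 2 / η * (k * ‖x k - T (x k)‖ ^ 2) := by field_simp
    _ ≤ L ^ 2 / η * (t * (φ (x 0) - φ (x k))) := by gcongr
    _ = L * (φ (x 0) - φ (x k)) := by simp only [t]; field_simp
    _ ≤ L * (φ (x 0) - φ xstar) := by gcongr
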